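/- arXiv:2206.11738 — 3 statements merged into one kernel-verified Lean document; each statement's English description precedes it below -/
import Mathlib

section
/- Under the drift condition (Pg)(x) ≤ g(x) − r(x) + b·1_C(x) with r ≥ 1, the Markov chain started from any x satisfies E_x[T(C)] ≤ g(x) + b, and in particular T(C) < ∞ almost surely, so the chain hits C in finite time. -/
open MeasureTheory ProbabilityTheory
open scoped ENNReal Classical

/-! Off `C` the drift condition gives `Pg + 1 ≤ g`. Let `A n` be the event that the path avoids `C`
up to time `n`. Integrating out the last step with the Markov property turns the drift inequality
into `E[g(X_{n+1}); A (n+1)] + P(A n) ≤ E[g(X_n); A n]`, so `∑ P(A n)`, which is `E[T(C)]`,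
telescopes to at most `E[g(X_0); A 0] ≤ g(x)`. A convergent sum forces `P(A n) → 0`, and the event
that the path never enters `C` lies in every `A n`. -/

theorem ENNReal.tsum_le_of_succ_add_le {u d : ℕ → ℝ≥0∞} (h : ∀ n, u (n + 1) + d n ≤ u n) :
    ∑' n, d n ≤ u 0 := by
  have hpartial : ∀ n, ∑ i ∈ Finset.range n, d i + u n ≤ u 0 := by
    intro n
    induction n with
    | zero => simp
    | succ n ih =>
      calc ∑ i ∈ Finset.range (n + 1), d i + u (n + 1)
          = ∑ i ∈ Finset.range n, d i + (u (n + 1) + d n) := by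
            rw [Finset.sum_range_succ]; ring
        _ ≤ ∑ i ∈ Finset.range n, d i + u n := by gcongr; exact h n
        _ ≤ u 0 := ih
  exact ENNReal.tsum_le_of_sum_range_le fun n => le_trans le_self_add (hpartial n)

section PathSpace

variable {S : Type*}

def avoidUntil (C : Set S) (n : ℕ) : Set (ℕ → S) := {ω | ∀ i ≤ n, ω i ∉ C}

section avoidUntil

variable {C : Set S}

theorem avoidUntil_succ_subset (n : ℕ) : avoidUntil C (n + 1) ⊆ avoidUntil C n :=
  fun _ hω i hi => hω i (hi.trans n.le_succ)

theorem mem_avoidUntil_congr {n : ℕ} {ω ω' : ℕ → S} (h : ∀ i ≤ n, ω i = ω' i) :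
    ω ∈ avoidUntil C n ↔ ω' ∈ avoidUntil C n := by
  simp only [avoidUntil, Set.mem_ofPred_eq]
  exact forall₂_congr fun i hi => by rw [h i hi]

variable [MeasurableSpace S]

theorem measurableSet_avoidUntil (hC : MeasurableSet C) (n : ℕ) :
    MeasurableSet (avoidUntil C n) := by
  simp only [avoidUntil, Set.ofPred_forall]
  exact .iInter fun i => .iInter fun _ => (measurable_pi_apply i hC).compl

end avoidUntil

variable [MeasurableSpace S]

def HasMarkovProperty (P : Kernel S S) (ν : Measure (ℕ → S)) : Prop :=
  ∀ (k : ℕ) (F : (ℕ → S) → ℝ≥0∞), Measurable F →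
    (∀ ω ω' : ℕ → S, (∀ i ≤ k, ω i = ω' i) → F ω = F ω') →
    ∀ f : S → ℝ≥0∞, Measurable f →
      ∫⁻ ω, F ω * f (ω (k + 1)) ∂ν = ∫⁻ ω, F ω * ∫⁻ y, f y ∂(P (ω k)) ∂ν

theorem lintegral_comp_eval_zero {ν : Measure (ℕ → S)} [IsProbabilityMeasure ν] {x : S}
    (h0 : ν {ω | ω 0 = x} = 1) {H : S → ℝ≥0∞} (hH : Measurable H) :
    ∫⁻ ω, H (ω 0) ∂ν = H x := by
  -- `{ω | ω 0 = x}` need not be measurable, but the larger set where `H (ω 0) = H x` is.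
  have hmeas : MeasurableSet {ω : ℕ → S | H (ω 0) = H x} :=
    (hH.comp (measurable_pi_apply 0)) (measurableSet_singleton (H x))
  have hfull : ν {ω | H (ω 0) = H x} = 1 :=
    le_antisymm prob_le_one (h0 ▸ measure_mono fun ω (hω : ω 0 = x) => by simp [hω])
  have hae : ∀ᵐ ω ∂ν, H (ω 0) = H x := (prob_compl_eq_zero_iff hmeas).2 hfull
  rw [lintegral_congr_ae hae, lintegral_const, measure_univ, mul_one]

section drift

variable {P : Kernel S S} {ν : Measure (ℕ → S)} {C : Set S} {g : S → ℝ≥0∞}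

theorem setLIntegral_avoidUntil_drift (hν : HasMarkovProperty P ν) (hC : MeasurableSet C)
    (hg : Measurable g) (hdrift : ∀ y ∉ C, ∫⁻ z, g z ∂(P y) + 1 ≤ g y) (n : ℕ) :
    ∫⁻ ω in avoidUntil C n, g (ω (n + 1)) ∂ν + ν (avoidUntil C n) ≤
      ∫⁻ ω in avoidUntil C n, g (ω n) ∂ν := by
  have hA : MeasurableSet (avoidUntil C n) := measurableSet_avoidUntil hC n
  have hind (f : (ℕ → S) → ℝ≥0∞) :
      ∫⁻ ω in avoidUntil C n, f ω ∂ν = ∫⁻ ω, (avoidUntil C n).indicator 1 ω * f ω ∂ν := by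
    rw [← lintegral_indicator hA]
    congr 1 with ω
    by_cases hω : ω ∈ avoidUntil C n <;> simp [hω]
  have hMarkov := hν n ((avoidUntil C n).indicator 1) (measurable_one.indicator hA)
    (fun ω ω' h => by simp only [Set.indicator_apply, Pi.one_apply, mem_avoidUntil_congr h]) g hg
  calc ∫⁻ ω in avoidUntil C n, g (ω (n + 1)) ∂ν + ν (avoidUntil C n)
      = ∫⁻ ω in avoidUntil C n, (∫⁻ z, g z ∂(P (ω n)) + 1) ∂ν := by
        rw [hind, hMarkov, ← hind, lintegral_add_right _ measurable_const, setLIntegral_const,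
          one_mul]
    _ ≤ ∫⁻ ω in avoidUntil C n, g (ω n) ∂ν :=
        setLIntegral_mono (hg.comp (measurable_pi_apply n)) fun ω hω => hdrift _ (hω n le_rfl)

theorem tsum_measure_avoidUntil_le [IsProbabilityMeasure ν] {x : S} (h0 : ν {ω | ω 0 = x} = 1)
    (hν : HasMarkovProperty P ν) (hC : MeasurableSet C) (hg : Measurable g)
    (hdrift : ∀ y ∉ C, ∫⁻ z, g z ∂(P y) + 1 ≤ g y) :
    ∑' n, ν (avoidUntil C n) ≤ g x := by
  set u : ℕ → ℝ≥0∞ := fun n => ∫⁻ ω in avoidUntil C n, g (ω n) ∂ν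
  have hstep : ∀ n, u (n + 1) + ν (avoidUntil C n) ≤ u n := fun n =>
    calc u (n + 1) + ν (avoidUntil C n)
        ≤ ∫⁻ ω in avoidUntil C n, g (ω (n + 1)) ∂ν + ν (avoidUntil C n) := by
          gcongr; exact lintegral_mono_set (avoidUntil_succ_subset n)
      _ ≤ u n := setLIntegral_avoidUntil_drift hν hC hg hdrift n
  calc ∑' n, ν (avoidUntil C n) ≤ u 0 := ENNReal.tsum_le_of_succ_add_le hstep
    _ ≤ ∫⁻ ω, g (ω 0) ∂ν := setLIntegral_le_lintegral _ _
    _ = g x := lintegral_comp_eval_zero h0 hg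

end drift

theorem lintegral_tsum_indicator_avoidUntil (ν : Measure (ℕ → S)) {C : Set S}
    (hC : MeasurableSet C) :
    ∫⁻ ω, ∑' j, (if ∀ i ≤ j, ω i ∉ C then (1 : ℝ≥0∞) else 0) ∂ν = ∑' j, ν (avoidUntil C j) := by
  have hmeas j := measurableSet_avoidUntil hC j
  calc ∫⁻ ω, ∑' j, (if ∀ i ≤ j, ω i ∉ C then (1 : ℝ≥0∞) else 0) ∂ν
      = ∫⁻ ω, ∑' j, (avoidUntil C j).indicator 1 ω ∂ν := by
        simp only [Set.indicator_apply, avoidUntil, Set.mem_ofPred_eq, Pi.one_apply]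
    _ = ∑' j, ν (avoidUntil C j) := by
      rw [lintegral_tsum fun j => (measurable_one.indicator (hmeas j)).aemeasurable]
      simp_rw [lintegral_indicator_one (hmeas _)]

theorem measure_forall_notMem_eq_zero {ν : Measure (ℕ → S)} {C : Set S}
    (h : ∑' n, ν (avoidUntil C n) ≠ ∞) : ν {ω | ∀ k, ω k ∉ C} = 0 :=
  nonpos_iff_eq_zero.1 <| ge_of_tendsto' (ENNReal.tendsto_atTop_zero_of_tsum_ne_top h)
    fun _ => measure_mono fun _ hω i _ => hω i

end PathSpace

theorem stmt2_general {S : Type*} [MeasurableSpace S]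
    (P : Kernel S S)
    (μ : S → Measure (ℕ → S))
    (hprob : ∀ x, IsProbabilityMeasure (μ x))
    (hinit : ∀ x, μ x {ω | ω 0 = x} = 1)
    -- Markov property: for any functional of the path up to time `k` and any test
    -- function of the state at time `k+1`, one may integrate out the last step via `P`.
    (hMarkov : ∀ x (k : ℕ) (F : (ℕ → S) → ℝ≥0∞), Measurable F →
      (∀ ω ω' : ℕ → S, (∀ i ≤ k, ω i = ω' i) → F ω = F ω') →
      ∀ f : S → ℝ≥0∞, Measurable f →
        ∫⁻ ω, F ω * f (ω (k + 1)) ∂(μ x) =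
        ∫⁻ ω, F ω * ∫⁻ y, f y ∂(P (ω k)) ∂(μ x))
    (g r : S → NNReal) (hg : Measurable g)
    (hr1 : ∀ x, 1 ≤ r x) (b : NNReal)
    (C : Set S) (hCmeas : MeasurableSet C)
    (hdrift : ∀ x, (∫⁻ y, (g y : ℝ≥0∞) ∂(P x)) + (r x : ℝ≥0∞) ≤
      (g x : ℝ≥0∞) + C.indicator (fun _ => (b : ℝ≥0∞)) x) :
    ∀ x : S,
      (∫⁻ ω, (∑' j : ℕ, if ∀ i ≤ j, ω i ∉ C then (1 : ℝ≥0∞) else 0) ∂(μ x) ≤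
        (g x : ℝ≥0∞) + (b : ℝ≥0∞)) ∧
      μ x {ω | ∀ k : ℕ, ω k ∉ C} = 0 := by
  intro x
  have hdrift_off : ∀ y ∉ C, ∫⁻ z, (g z : ℝ≥0∞) ∂(P y) + 1 ≤ g y := fun y hy =>
    calc ∫⁻ z, (g z : ℝ≥0∞) ∂(P y) + 1 ≤ ∫⁻ z, (g z : ℝ≥0∞) ∂(P y) + r y := by
          gcongr; exact_mod_cast hr1 y
      _ ≤ g y := by simpa [Set.indicator_of_notMem hy] using hdrift y
  have hsum : ∑' n, μ x (avoidUntil C n) ≤ g x :=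
    have := hprob x
    tsum_measure_avoidUntil_le (hinit x) (hMarkov x) hCmeas hg.coe_nnreal_ennreal hdrift_off
  rw [lintegral_tsum_indicator_avoidUntil _ hCmeas]
  exact ⟨hsum.trans le_self_add,
    measure_forall_notMem_eq_zero (ne_top_of_le_ne_top ENNReal.coe_ne_top hsum)⟩

/-- **Statement 1.** If the Markov chain with kernel `P` (with path laws `μ x`) satisfies the
drift condition `(Pg)(x) ≤ g(x) − r(x) + b·1_C(x)` (stated additively to avoid truncated
subtraction), then for every `x`,
`E_x[T(C)] ≤ g(x) + b` (where `T(C)`, the first hitting time of `C`, is expressed as the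
number of times `j` with `X_i ∉ C` for all `i ≤ j`), and `T(C) < ∞` a.s. -/
theorem stmt2 {S : Type*} [MeasurableSpace S]
    (P : Kernel S S) [IsMarkovKernel P]
    (μ : S → Measure (ℕ → S))
    (hprob : ∀ x, IsProbabilityMeasure (μ x))
    (hinit : ∀ x, μ x {ω | ω 0 = x} = 1)
    -- Markov property: for any functional of the path up to time `k` and any test
    -- function of the state at time `k+1`, one may integrate out the last step via `P`.
    (hMarkov : ∀ x (k : ℕ) (F : (ℕ → S) → ℝ≥0∞), Measurable F →
      (∀ ω ω' : ℕ → S, (∀ i ≤ k, ω i = ω' i) → F ω = F ω') →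
      ∀ f : S → ℝ≥0∞, Measurable f →
        ∫⁻ ω, F ω * f (ω (k + 1)) ∂(μ x) =
        ∫⁻ ω, F ω * ∫⁻ y, f y ∂(P (ω k)) ∂(μ x))
    (g r : S → NNReal) (hg : Measurable g) (hr : Measurable r)
    (hr1 : ∀ x, 1 ≤ r x) (b : NNReal)
    (C : Set S) (hCmeas : MeasurableSet C)
    (hdrift : ∀ x, (∫⁻ y, (g y : ℝ≥0∞) ∂(P x)) + (r x : ℝ≥0∞) ≤
      (g x : ℝ≥0∞) + C.indicator (fun _ => (b : ℝ≥0∞)) x) :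
    ∀ x : S,
      (∫⁻ ω, (∑' j : ℕ, if ∀ i ≤ j, ω i ∉ C then (1 : ℝ≥0∞) else 0) ∂(μ x) ≤
        (g x : ℝ≥0∞) + (b : ℝ≥0∞)) ∧
      μ x {ω | ∀ k : ℕ, ω k ∉ C} = 0 :=
  stmt2_general P μ hprob hinit hMarkov g r hg hr1 b C hCmeas hdrift
end

section
/- Let m be the probability measure on S defined by m(B) = E_φ[∑_{j=0}^{τ−1} 1{X_j ∈ B}] / E_φ[τ] for a positive recurrent regenerative Markov chain X with kernel P and regeneration distribution φ. Then m is stationary for P, i.e. m(B) = ∫_S m(dx) P(x,B) for every measurable B. -/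
open MeasureTheory ProbabilityTheory Filter Finset
open scoped ENNReal Topology

/-!
Testing the Cesàro convergence against `1` gives `m S = μ Ω = 1`. For measurable `B`, the
Markov identity makes `E P(X_j, B)` the shift of the bounded sequence `E 1_B(X_j)`; Cesàro
averages of a bounded sequence and of its shift differ by `O(1/n)`, so their limits `m B` and
`∫ P(x, B) dm` coincide.
-/

namespace ENNReal

theorem le_of_tendsto_div_of_le_add {s t : ℕ → ℝ≥0∞} {M a b : ℝ≥0∞} (hM : M ≠ ⊤)
    (hst : ∀ n, s n ≤ t n + M)
    (hs : Tendsto (fun n : ℕ => s n / n) atTop (𝓝 a))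
    (ht : Tendsto (fun n : ℕ => t n / n) atTop (𝓝 b)) : a ≤ b := by
  have hM_div : Tendsto (fun n : ℕ => M / n) atTop (𝓝 0) := by
    simpa [div_eq_mul_inv] using
      ENNReal.Tendsto.const_mul ENNReal.tendsto_inv_nat_nhds_zero (Or.inr hM)
  refine le_of_tendsto_of_tendsto' hs (by simpa using ht.add hM_div) fun n => ?_
  rw [← ENNReal.add_div]
  exact ENNReal.div_le_div_right (hst n) _

theorem cesaro_limit_eq_of_shift {c : ℕ → ℝ≥0∞} {M a b : ℝ≥0∞} (hM : M ≠ ⊤)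
    (hc : ∀ j, c j ≤ M)
    (ha : Tendsto (fun n : ℕ => (∑ j ∈ range n, c j) / n) atTop (𝓝 a))
    (hb : Tendsto (fun n : ℕ => (∑ j ∈ range n, c (j + 1)) / n) atTop (𝓝 b)) : a = b := by
  have hsum : ∀ n, ∑ j ∈ range n, c j + c n = ∑ j ∈ range n, c (j + 1) + c 0 := fun n => by
    rw [← sum_range_succ, sum_range_succ']
  refine le_antisymm (le_of_tendsto_div_of_le_add hM (fun n => ?_) ha hb)
    (le_of_tendsto_div_of_le_add hM (fun n => ?_) hb ha)
  · calc ∑ j ∈ range n, c j ≤ ∑ j ∈ range n, c j + c n := le_self_add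
      _ ≤ ∑ j ∈ range n, c (j + 1) + M := hsum n ▸ add_le_add_right (hc 0) _
  · calc ∑ j ∈ range n, c (j + 1) ≤ ∑ j ∈ range n, c (j + 1) + c 0 := le_self_add
      _ ≤ ∑ j ∈ range n, c j + M := hsum n ▸ add_le_add_right (hc n) _

theorem tendsto_natCast_div_self : Tendsto (fun n : ℕ => (n : ℝ≥0∞) / n) atTop (𝓝 1) :=
  tendsto_const_nhds.congr' <| (eventually_gt_atTop 0).mono fun n hn =>
    (ENNReal.div_self (by exact_mod_cast hn.ne') (natCast_ne_top n)).symm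

end ENNReal

theorem stmt5_general {S Ω : Type*} [MeasurableSpace S] [MeasurableSpace Ω]
    (P : Kernel S S) [IsMarkovKernel P]
    (μ : Measure Ω) [IsProbabilityMeasure μ]
    (X : ℕ → Ω → S)
    (m : Measure S)
    -- one-step Markov identity:
    (hstep : ∀ (j : ℕ) (f : S → ℝ≥0∞), Measurable f →
      ∫⁻ ω, f (X (j + 1) ω) ∂μ = ∫⁻ ω, ∫⁻ y, f y ∂(P (X j ω)) ∂μ)
    -- Cesàro convergence for bounded nonnegative measurable `f`:
    (hCesaro : ∀ (f : S → ℝ≥0∞), Measurable f → ∀ M : ℝ≥0∞, M ≠ ⊤ → (∀ x, f x ≤ M) →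
      Tendsto (fun n : ℕ => (∑ j ∈ Finset.range n, ∫⁻ ω, f (X j ω) ∂μ) / (n : ℝ≥0∞))
        atTop (nhds (∫⁻ x, f x ∂m))) :
    IsProbabilityMeasure m ∧
    ∀ B : Set S, MeasurableSet B → m B = ∫⁻ x, P x B ∂m := by
  have hmass := hCesaro 1 measurable_const 1 ENNReal.one_ne_top fun _ => le_rfl
  simp only [Pi.one_apply, lintegral_const, measure_univ, mul_one, one_mul, sum_const, card_range,
    nsmul_eq_mul] at hmass
  refine ⟨⟨tendsto_nhds_unique hmass ENNReal.tendsto_natCast_div_self⟩, fun B hB => ?_⟩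
  have hB_le : ∀ x, B.indicator 1 x ≤ (1 : ℝ≥0∞) := Set.indicator_le fun _ _ => le_rfl
  have hvisit := hCesaro _ (measurable_one.indicator hB) 1 ENNReal.one_ne_top hB_le
  have hnext := hCesaro (fun x => P x B) (P.measurable_coe hB) 1 ENNReal.one_ne_top
    fun _ => prob_le_one
  rw [lintegral_indicator_one hB] at hvisit
  refine ENNReal.cesaro_limit_eq_of_shift ENNReal.one_ne_top (fun j => ?_) hvisit ?_
  · calc ∫⁻ ω, B.indicator 1 (X j ω) ∂μ ≤ ∫⁻ _, 1 ∂μ := lintegral_mono fun ω => hB_le _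
      _ = 1 := by simp
  · simpa only [hstep _ _ (measurable_one.indicator hB), lintegral_indicator_one hB] using hnext

/-- Let `m(B) = E_φ[∑_{j<τ} 1{X_j ∈ B}] / E_φ[τ]` be the normalized
expected occupation measure over a regenerative cycle of a positive recurrent regenerative
Markov chain `X` with kernel `P` started from `φ` (law `μ`). Given the one-step Markov
identity `E f(X_{j+1}) = E (Pf)(X_j)` and the Cesàro convergence
`(1/n)∑_{j<n} E f(X_j) → mf` for bounded `f`, the measure `m` is a probability measure and
is stationary for `P`: `m(B) = ∫ P(x,B) m(dx)` for every measurable `B`. -/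
theorem stmt5 {S Ω : Type*} [MeasurableSpace S] [MeasurableSpace Ω]
    (P : Kernel S S) [IsMarkovKernel P]
    (μ : Measure Ω) [IsProbabilityMeasure μ]
    (X : ℕ → Ω → S) (hX : ∀ n, Measurable (X n))
    (τ : Ω → ℕ) (hτmeas : Measurable τ) (hτ1 : ∀ ω, 1 ≤ τ ω)
    (hτint : ∫⁻ ω, (τ ω : ℝ≥0∞) ∂μ ≠ ⊤)
    (m : Measure S)
    (hm : m = (∫⁻ ω, (τ ω : ℝ≥0∞) ∂μ)⁻¹ •
      Measure.sum (fun j : ℕ => (μ.restrict {ω | j < τ ω}).map (X j)))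
    -- one-step Markov identity:
    (hstep : ∀ (j : ℕ) (f : S → ℝ≥0∞), Measurable f →
      ∫⁻ ω, f (X (j + 1) ω) ∂μ = ∫⁻ ω, ∫⁻ y, f y ∂(P (X j ω)) ∂μ)
    -- Cesàro convergence for bounded nonnegative measurable `f`:
    (hCesaro : ∀ (f : S → ℝ≥0∞), Measurable f → ∀ M : ℝ≥0∞, M ≠ ⊤ → (∀ x, f x ≤ M) →
      Tendsto (fun n : ℕ => (∑ j ∈ Finset.range n, ∫⁻ ω, f (X j ω) ∂μ) / (n : ℝ≥0∞))
        atTop (nhds (∫⁻ x, f x ∂m))) :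
    IsProbabilityMeasure m ∧
    ∀ B : Set S, MeasurableSet B → m B = ∫⁻ x, P x B ∂m :=
  stmt5_general P μ X m hstep hCesaro
end

section
/- Let μ_1, μ_2 be probability measures on S, r : S → [1,∞), and ‖μ_1 − μ_2‖_r = sup{∫(μ_1 − μ_2)(dx) f(x) : |f| ≤ r}. Suppose π = (E_φ ∑_{j=0}^{τ−1} 1{X_j ∈ ·})/(E_φ τ) and π_n = (E_φ ∑_{j=0}^{(τ∧T_n)−1} 1{X_j ∈ ·})/(E_φ τ∧T_n), where T_n ↑ ∞ a.s. and E_φ ∑_{j=0}^{τ−1} r(X_j) < ∞. Then ‖π_n − π‖_r ≤ 2·E_φ[∑_{j=τ∧T_n}^{τ−1} r(X_j)]·E_φ[∑_{j=0}^{τ−1} r(X_j)]/(E_φ[τ∧T_n])², and consequently ‖π_n − π‖_r → 0 as n → ∞. -/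
open MeasureTheory ProbabilityTheory Filter
open scoped ENNReal Classical

/-- The `r`-weighted total variation distance
`‖μ₁ − μ₂‖_r = sup { ∫ f dμ₁ − ∫ f dμ₂ : f measurable, |f| ≤ r }`. -/
noncomputable def rdist {S : Type*} [MeasurableSpace S]
    (μ₁ μ₂ : Measure S) (r : S → ℝ) : ℝ :=
  sSup {d : ℝ | ∃ f : S → ℝ, Measurable f ∧ (∀ x, |f x| ≤ r x) ∧
    d = (∫ x, f x ∂μ₁) - ∫ x, f x ∂μ₂}

lemma measurable_comp_nat {Ω α : Type*} [MeasurableSpace Ω] [MeasurableSpace α]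
    {g : ℕ → Ω → α} (hg : ∀ n, Measurable (g n)) {τ : Ω → ℕ} (hτ : Measurable τ) :
    Measurable fun ω => g (τ ω) ω := by
  intro s hs
  have : (fun ω => g (τ ω) ω) ⁻¹' s = ⋃ n, {ω | τ ω = n} ∩ g n ⁻¹' s := by
    ext ω
    simp only [Set.mem_preimage, Set.mem_iUnion, Set.mem_inter_iff, Set.mem_setOf_eq]
    exact ⟨fun h => ⟨τ ω, rfl, h⟩, fun ⟨n, hn, h⟩ => by rwa [hn]⟩
  rw [this]
  exact MeasurableSet.iUnion fun n =>
    (hτ (measurableSet_singleton n)).inter (hg n hs)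

lemma keyL {S Ω : Type*} [MeasurableSpace S] [MeasurableSpace Ω] (μ : Measure Ω)
    (X : ℕ → Ω → S) (hX : ∀ n, Measurable (X n)) (τ : Ω → ℕ)
    (A : ℕ → Set Ω) (hA : ∀ j, MeasurableSet (A j)) (hAsub : ∀ j ω, ω ∈ A j → j < τ ω)
    (h : S → ℝ) (hh : Measurable h) (hh0 : ∀ x, 0 ≤ h x) :
    ∫⁻ ω, ENNReal.ofReal (∑ j ∈ Finset.range (τ ω), if ω ∈ A j then h (X j ω) else 0) ∂μ
      = ∫⁻ x, ENNReal.ofReal (h x) ∂(Measure.sum fun j => (μ.restrict (A j)).map (X j)) := by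
  rw [lintegral_sum_measure]
  have hme : Measurable fun x => ENNReal.ofReal (h x) := ENNReal.measurable_ofReal.comp hh
  have h1 : ∀ j, ∫⁻ x, ENNReal.ofReal (h x) ∂((μ.restrict (A j)).map (X j))
      = ∫⁻ ω, (A j).indicator (fun ω => ENNReal.ofReal (h (X j ω))) ω ∂μ := by
    intro j
    rw [lintegral_map hme (hX j), ← lintegral_indicator (hA j)]
  simp_rw [h1]
  rw [← lintegral_tsum (f := fun j ω => (A j).indicator (fun ω => ENNReal.ofReal (h (X j ω))) ω)
    (fun j => ((hme.comp (hX j)).indicator (hA j)).aemeasurable)]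
  congr 1
  ext ω
  have hz : ∀ j ∉ Finset.range (τ ω),
      (A j).indicator (fun ω => ENNReal.ofReal (h (X j ω))) ω = 0 := by
    intro j hj
    simp only [Finset.mem_range, not_lt] at hj
    have : ω ∉ A j := fun hmem => absurd (hAsub j ω hmem) (not_lt.2 hj)
    simp [Set.indicator_of_notMem this]
  rw [tsum_eq_sum hz, ENNReal.ofReal_sum_of_nonneg
    (fun j _ => by by_cases hc : ω ∈ A j <;> simp [hc, hh0])]
  refine Finset.sum_congr rfl fun j _ => ?_
  by_cases hc : ω ∈ A j <;> simp [Set.indicator, hc]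

lemma keyI {S Ω : Type*} [MeasurableSpace S] [MeasurableSpace Ω] (μ : Measure Ω)
    (X : ℕ → Ω → S) (hX : ∀ n, Measurable (X n)) (τ : Ω → ℕ) (hτ : Measurable τ)
    (A : ℕ → Set Ω) (hA : ∀ j, MeasurableSet (A j)) (hAsub : ∀ j ω, ω ∈ A j → j < τ ω)
    (h : S → ℝ) (hh : Measurable h) (hh0 : ∀ x, 0 ≤ h x) :
    ∫ ω, (∑ j ∈ Finset.range (τ ω), if ω ∈ A j then h (X j ω) else 0) ∂μ
      = (∫⁻ x, ENNReal.ofReal (h x) ∂(Measure.sum fun j => (μ.restrict (A j)).map (X j))).toReal := by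
  rw [← keyL μ X hX τ A hA hAsub h hh hh0]
  refine integral_eq_lintegral_of_nonneg_ae (Eventually.of_forall fun ω => ?_) ?_
  · exact Finset.sum_nonneg fun j _ => by by_cases hc : ω ∈ A j <;> simp [hc, hh0]
  · have : Measurable fun ω => ∑ j ∈ Finset.range (τ ω), if ω ∈ A j then h (X j ω) else 0 := by
      have hg : ∀ n : ℕ, Measurable fun ω => ∑ j ∈ Finset.range n,
          if ω ∈ A j then h (X j ω) else 0 := fun n =>
        Finset.measurable_sum _ fun j _ => Measurable.ite (hA j) (hh.comp (hX j)) measurable_const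
      exact measurable_comp_nat hg hτ
    exact this.aestronglyMeasurable

set_option maxHeartbeats 1000000 in
/-- With `π` the regenerative-ratio stationary distribution and `π_n` the
truncated regenerative ratio (cycles stopped at `τ ∧ T_n`), where `T_n ↑ ∞` a.s. and
`E_φ ∑_{j<τ} r(X_j) < ∞`, one has the bound
`‖π_n − π‖_r ≤ 2·E_φ[∑_{j=τ∧T_n}^{τ−1} r(X_j)]·E_φ[∑_{j<τ} r(X_j)]/(E_φ[τ∧T_n])²`,
and consequently `‖π_n − π‖_r → 0`. -/
theorem stmt6 {S Ω : Type*} [MeasurableSpace S] [MeasurableSpace Ω]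
    (μ : Measure Ω) [IsProbabilityMeasure μ]
    (X : ℕ → Ω → S) (hX : ∀ n, Measurable (X n))
    (r : S → ℝ) (hrmeas : Measurable r) (hr1 : ∀ x, 1 ≤ r x)
    (τ : Ω → ℕ) (hτmeas : Measurable τ) (hτ1 : ∀ ω, 1 ≤ τ ω)
    (T : ℕ → Ω → ℕ∞) (hTmeas : ∀ n, Measurable (T n))
    (hTmono : ∀ ω, Monotone fun n => T n ω)
    (hTinf : ∀ᵐ ω ∂μ, Tendsto (fun n => T n ω) atTop atTop)
    -- `E_φ ∑_{j<τ} r(X_j) < ∞`: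
    (hint : Integrable (fun ω => ∑ j ∈ Finset.range (τ ω), r (X j ω)) μ)
    -- `1 ≤ E_φ[τ ∧ T_n]`:
    (hD1 : ∀ n, 1 ≤ ∫ ω, (∑ j ∈ Finset.range (τ ω),
      if (j : ℕ∞) < T n ω then (1 : ℝ) else 0) ∂μ)
    (π : Measure S) [IsProbabilityMeasure π]
    (πn : ℕ → Measure S) (hπnprob : ∀ n, IsProbabilityMeasure (πn n))
    -- `π(B) = E_φ[∑_{j<τ} 1{X_j ∈ B}] / E_φ[τ]`:
    (hπ : ∀ B : Set S, MeasurableSet B → (π B).toReal =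
      (∫ ω, (∑ j ∈ Finset.range (τ ω), if X j ω ∈ B then (1 : ℝ) else 0) ∂μ) /
        ∫ ω, (τ ω : ℝ) ∂μ)
    -- `π_n(B) = E_φ[∑_{j<τ∧T_n} 1{X_j ∈ B}] / E_φ[τ ∧ T_n]`:
    (hπn : ∀ (n : ℕ) (B : Set S), MeasurableSet B → (πn n B).toReal =
      (∫ ω, (∑ j ∈ Finset.range (τ ω),
        if (j : ℕ∞) < T n ω ∧ X j ω ∈ B then (1 : ℝ) else 0) ∂μ) /
        ∫ ω, (∑ j ∈ Finset.range (τ ω), if (j : ℕ∞) < T n ω then (1 : ℝ) else 0) ∂μ) :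
    (∀ n, rdist (πn n) π r ≤
      2 * (∫ ω, (∑ j ∈ Finset.range (τ ω),
            if T n ω ≤ (j : ℕ∞) then r (X j ω) else 0) ∂μ) *
        (∫ ω, (∑ j ∈ Finset.range (τ ω), r (X j ω)) ∂μ) /
        (∫ ω, (∑ j ∈ Finset.range (τ ω), if (j : ℕ∞) < T n ω then (1 : ℝ) else 0) ∂μ) ^ 2)
    ∧ Tendsto (fun n => rdist (πn n) π r) atTop (nhds 0) := by
  classical
  have hr0 : ∀ x, (0:ℝ) ≤ r x := fun x => zero_le_one.trans (hr1 x)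
  -- index sets
  set AF : ℕ → Set Ω := fun j => {ω | j < τ ω} with hAF
  set AN : ℕ → ℕ → Set Ω := fun n j => {ω | j < τ ω ∧ (j : ℕ∞) < T n ω} with hANdef
  set AC : ℕ → ℕ → Set Ω := fun n j => {ω | j < τ ω ∧ T n ω ≤ (j : ℕ∞)} with hACdef
  have hAFm : ∀ j, MeasurableSet (AF j) := fun j => hτmeas measurableSet_Ioi
  have hTset : ∀ n (s : Set ℕ∞), MeasurableSet (T n ⁻¹' s) := fun n s =>
    hTmeas n s.to_countable.measurableSet
  have hANm : ∀ n j, MeasurableSet (AN n j) := fun n j =>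
    (hAFm j).inter (hTset n {x | (j : ℕ∞) < x})
  have hACm : ∀ n j, MeasurableSet (AC n j) := fun n j =>
    (hAFm j).inter (hTset n {x | x ≤ (j : ℕ∞)})
  -- the measures
  set ν : Measure S := Measure.sum (fun j => (μ.restrict (AF j)).map (X j)) with hνdef
  set νn : ℕ → Measure S := fun n => Measure.sum (fun j => (μ.restrict (AN n j)).map (X j))
    with hνndef
  set νc : ℕ → Measure S := fun n => Measure.sum (fun j => (μ.restrict (AC n j)).map (X j))
    with hνcdef
  have hAFsplit : ∀ n j, AF j = AN n j ∪ AC n j := by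
    intro n j
    ext ω
    simp only [AF, AN, AC, Set.mem_setOf_eq, Set.mem_union]
    constructor
    · intro h
      rcases lt_or_ge (j : ℕ∞) (T n ω) with h' | h'
      · exact Or.inl ⟨h, h'⟩
      · exact Or.inr ⟨h, h'⟩
    · rintro (⟨h, -⟩ | ⟨h, -⟩) <;> exact h
  have hdisj : ∀ n j, Disjoint (AN n j) (AC n j) := by
    intro n j
    rw [Set.disjoint_left]
    rintro ω ⟨-, h1⟩ ⟨-, h2⟩
    exact absurd h1 (not_lt.2 h2)
  have hsplit : ∀ n, ν = νn n + νc n := by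
    intro n
    rw [hνdef, hνndef, hνcdef, Measure.sum_add_sum]
    congr 1
    funext j
    rw [hAFsplit n j, Measure.restrict_union (hdisj n j) (hACm n j), Measure.map_add _ _ (hX j)]
  -- lintegrals of r
  set L : ℝ≥0∞ := ∫⁻ x, ENNReal.ofReal (r x) ∂ν with hLdef
  set Ln : ℕ → ℝ≥0∞ := fun n => ∫⁻ x, ENNReal.ofReal (r x) ∂(νn n) with hLndef
  set Lc : ℕ → ℝ≥0∞ := fun n => ∫⁻ x, ENNReal.ofReal (r x) ∂(νc n) with hLcdef
  have hLsplit : ∀ n, L = Ln n + Lc n := fun n => by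
    rw [hLdef, hsplit n, lintegral_add_measure, hLndef, hLcdef]
  -- key conversions
  have hconvF : ∀ h : S → ℝ, Measurable h → (∀ x, 0 ≤ h x) →
      ∀ g : Ω → ℝ, (∀ ω, g ω = ∑ j ∈ Finset.range (τ ω), if ω ∈ AF j then h (X j ω) else 0) →
      ∫ ω, g ω ∂μ = (∫⁻ x, ENNReal.ofReal (h x) ∂ν).toReal := by
    intro h hh hh0 g hg
    simp_rw [hg]
    rw [hνdef]
    have := keyI μ X hX τ hτmeas AF hAFm (fun j ω hj => hj) h hh hh0
    convert this using 3
    all_goals exact Finset.sum_congr rfl fun j _ => by split_ifs <;> rfl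
  have hconvN : ∀ n, ∀ h : S → ℝ, Measurable h → (∀ x, 0 ≤ h x) →
      ∀ g : Ω → ℝ, (∀ ω, g ω = ∑ j ∈ Finset.range (τ ω), if ω ∈ AN n j then h (X j ω) else 0) →
      ∫ ω, g ω ∂μ = (∫⁻ x, ENNReal.ofReal (h x) ∂(νn n)).toReal := by
    intro n h hh hh0 g hg
    simp_rw [hg]
    rw [hνndef]
    have := keyI μ X hX τ hτmeas (AN n) (hANm n) (fun j ω hj => hj.1) h hh hh0
    convert this using 3
    all_goals exact Finset.sum_congr rfl fun j _ => by split_ifs <;> rfl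
  have hconvC : ∀ n, ∀ h : S → ℝ, Measurable h → (∀ x, 0 ≤ h x) →
      ∀ g : Ω → ℝ, (∀ ω, g ω = ∑ j ∈ Finset.range (τ ω), if ω ∈ AC n j then h (X j ω) else 0) →
      ∫ ω, g ω ∂μ = (∫⁻ x, ENNReal.ofReal (h x) ∂(νc n)).toReal := by
    intro n h hh hh0 g hg
    simp_rw [hg]
    rw [hνcdef]
    have := keyI μ X hX τ hτmeas (AC n) (hACm n) (fun j ω hj => hj.1) h hh hh0
    convert this using 3
    all_goals exact Finset.sum_congr rfl fun j _ => by split_ifs <;> rfl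
  -- finiteness of L
  have hLne : L ≠ ⊤ := by
    have h1 : ∫⁻ ω, ENNReal.ofReal (∑ j ∈ Finset.range (τ ω), r (X j ω)) ∂μ = L := by
      rw [hLdef, hνdef]
      rw [← keyL μ X hX τ AF hAFm (fun j ω hj => hj) r hrmeas hr0]
      congr 1
      funext ω
      congr 1
      exact (Finset.sum_congr rfl fun j hj =>
        if_pos (show ω ∈ AF j from Finset.mem_range.1 hj)).symm
    rw [← h1]
    exact hint.lintegral_lt_top.ne
  -- value conversions
  have hNrL : (∫ ω, (∑ j ∈ Finset.range (τ ω), r (X j ω)) ∂μ) = L.toReal := by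
    rw [hLdef]
    refine hconvF r hrmeas hr0 _ fun ω => ?_
    exact (Finset.sum_congr rfl fun j hj =>
      if_pos (show ω ∈ AF j from Finset.mem_range.1 hj)).symm
  have hDr : (∫ ω, (τ ω : ℝ) ∂μ) = (ν Set.univ).toReal := by
    have h1 := hconvF (fun _ => 1) measurable_const (fun _ => zero_le_one)
      (fun ω => (τ ω : ℝ)) (fun ω => by
        have h2 : ∀ j ∈ Finset.range (τ ω), (if ω ∈ AF j then (1:ℝ) else 0) = 1 :=
          fun j hj => if_pos (show ω ∈ AF j from Finset.mem_range.1 hj)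
        rw [Finset.sum_congr rfl h2]
        simp)
    rw [h1]
    simp [lintegral_one]
  have hDnν : ∀ n, (∫ ω, (∑ j ∈ Finset.range (τ ω),
      if (j : ℕ∞) < T n ω then (1 : ℝ) else 0) ∂μ) = (νn n Set.univ).toReal := by
    intro n
    have h1 := hconvN n (fun _ => 1) measurable_const (fun _ => zero_le_one)
      (fun ω => ∑ j ∈ Finset.range (τ ω), if (j : ℕ∞) < T n ω then (1 : ℝ) else 0)
      (fun ω => Finset.sum_congr rfl fun j hj => by
        have hjτ : j < τ ω := Finset.mem_range.1 hj
        simp only [AN, Set.mem_setOf_eq]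
        split_ifs <;> first | rfl | (exfalso; tauto))
    rw [h1]
    simp [lintegral_one]
  have hEnL : ∀ n, (∫ ω, (∑ j ∈ Finset.range (τ ω),
      if T n ω ≤ (j : ℕ∞) then r (X j ω) else 0) ∂μ) = (Lc n).toReal := by
    intro n
    rw [hLcdef]
    refine hconvC n r hrmeas hr0 _ fun ω => ?_
    refine Finset.sum_congr rfl fun j hj => ?_
    have hjτ : j < τ ω := Finset.mem_range.1 hj
    simp only [AC, Set.mem_setOf_eq]
    split_ifs <;> first | rfl | (exfalso; tauto)
  have hNum : ∀ B : Set S, MeasurableSet B →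
      (∫ ω, (∑ j ∈ Finset.range (τ ω), if X j ω ∈ B then (1:ℝ) else 0) ∂μ)
        = (ν B).toReal := by
    intro B hB
    have hmB : Measurable fun x => if x ∈ B then (1:ℝ) else 0 :=
      Measurable.ite hB measurable_const measurable_const
    have h1 := hconvF (fun x => if x ∈ B then (1:ℝ) else 0) hmB
      (fun x => by by_cases hx : x ∈ B <;> simp [hx])
      (fun ω => ∑ j ∈ Finset.range (τ ω), if X j ω ∈ B then (1:ℝ) else 0)
      (fun ω => Finset.sum_congr rfl fun j hj => by
        rw [if_pos (show ω ∈ AF j from Finset.mem_range.1 hj)])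
    rw [h1]
    congr 1
    calc ∫⁻ x, ENNReal.ofReal (if x ∈ B then (1:ℝ) else 0) ∂ν
        = ∫⁻ x, B.indicator 1 x ∂ν := by
          congr 1
          funext x
          by_cases hx : x ∈ B <;> simp [hx, Set.indicator]
      _ = ν B := lintegral_indicator_one hB
  have hNumn : ∀ (n : ℕ) (B : Set S), MeasurableSet B →
      (∫ ω, (∑ j ∈ Finset.range (τ ω),
        if (j : ℕ∞) < T n ω ∧ X j ω ∈ B then (1:ℝ) else 0) ∂μ)
        = (νn n B).toReal := by
    intro n B hB
    have hmB : Measurable fun x => if x ∈ B then (1:ℝ) else 0 :=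
      Measurable.ite hB measurable_const measurable_const
    have h1 := hconvN n (fun x => if x ∈ B then (1:ℝ) else 0) hmB
      (fun x => by by_cases hx : x ∈ B <;> simp [hx])
      (fun ω => ∑ j ∈ Finset.range (τ ω),
        if (j : ℕ∞) < T n ω ∧ X j ω ∈ B then (1:ℝ) else 0)
      (fun ω => Finset.sum_congr rfl fun j hj => by
        have hjτ : j < τ ω := Finset.mem_range.1 hj
        simp only [AN, Set.mem_setOf_eq]
        split_ifs <;> first | rfl | (exfalso; tauto))
    rw [h1]
    congr 1
    calc ∫⁻ x, ENNReal.ofReal (if x ∈ B then (1:ℝ) else 0) ∂(νn n)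
        = ∫⁻ x, B.indicator 1 x ∂(νn n) := by
          congr 1
          funext x
          by_cases hx : x ∈ B <;> simp [hx, Set.indicator]
      _ = νn n B := lintegral_indicator_one hB
  -- order/finiteness facts
  have hle_r : ∀ m : Measure S, m Set.univ ≤ ∫⁻ x, ENNReal.ofReal (r x) ∂m := fun m => by
    rw [← lintegral_one]
    exact lintegral_mono fun x => ENNReal.one_le_ofReal.2 (hr1 x)
  have hLn_le : ∀ n, Ln n ≤ L := fun n => by rw [hLsplit n]; exact le_self_add
  have hLc_le : ∀ n, Lc n ≤ L := fun n => by rw [hLsplit n]; exact le_add_self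
  have hLnne : ∀ n, Ln n ≠ ⊤ := fun n => ne_top_of_le_ne_top hLne (hLn_le n)
  have hLcne : ∀ n, Lc n ≠ ⊤ := fun n => ne_top_of_le_ne_top hLne (hLc_le n)
  have hνu_ne : ν Set.univ ≠ ⊤ := ne_top_of_le_ne_top hLne (by rw [hLdef]; exact hle_r ν)
  have hνnu_ne : ∀ n, νn n Set.univ ≠ ⊤ := fun n =>
    ne_top_of_le_ne_top (hLnne n) (by rw [hLndef]; exact hle_r _)
  have hνcu_ne : ∀ n, νc n Set.univ ≠ ⊤ := fun n =>
    ne_top_of_le_ne_top (hLcne n) (by rw [hLcdef]; exact hle_r _)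
  have hνn_le : ∀ n, νn n Set.univ ≤ ν Set.univ := fun n => by
    rw [hsplit n, Measure.add_apply]; exact le_self_add
  have hDn1 : ∀ n, 1 ≤ (νn n Set.univ).toReal := fun n => by rw [← hDnν n]; exact hD1 n
  have hνnu_ne0 : ∀ n, νn n Set.univ ≠ 0 := fun n h =>
    absurd (hDn1 n) (by rw [h]; norm_num)
  have hDrD : 1 ≤ (ν Set.univ).toReal :=
    (hDn1 0).trans (ENNReal.toReal_mono hνu_ne (hνn_le 0))
  have hνu_ne0 : ν Set.univ ≠ 0 := fun h => absurd hDrD (by rw [h]; norm_num)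
  -- measure identifications
  have hπeq : π = (ν Set.univ)⁻¹ • ν := by
    ext B hB
    rw [Measure.smul_apply, smul_eq_mul]
    have hfin : (ν Set.univ)⁻¹ * ν B ≠ ⊤ :=
      ENNReal.mul_ne_top (ENNReal.inv_ne_top.2 hνu_ne0)
        (ne_top_of_le_ne_top hνu_ne (measure_mono (Set.subset_univ B)))
    refine (ENNReal.toReal_eq_toReal_iff' (measure_ne_top π B) hfin).1 ?_
    rw [hπ B hB, hNum B hB, hDr, ENNReal.toReal_mul, ENNReal.toReal_inv,
      div_eq_mul_inv, mul_comm]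
  have hπneq : ∀ n, πn n = (νn n Set.univ)⁻¹ • (νn n) := by
    intro n
    have := hπnprob n
    ext B hB
    rw [Measure.smul_apply, smul_eq_mul]
    have hfin : (νn n Set.univ)⁻¹ * νn n B ≠ ⊤ :=
      ENNReal.mul_ne_top (ENNReal.inv_ne_top.2 (hνnu_ne0 n))
        (ne_top_of_le_ne_top (hνnu_ne n) (measure_mono (Set.subset_univ B)))
    refine (ENNReal.toReal_eq_toReal_iff' (measure_ne_top (πn n) B) hfin).1 ?_
    rw [hπn n B hB, hNumn n B hB, hDnν n, ENNReal.toReal_mul, ENNReal.toReal_inv,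
      div_eq_mul_inv, mul_comm]
  -- integrability
  have hIntOf : ∀ m : Measure S, (∫⁻ x, ENNReal.ofReal (r x) ∂m) ≠ ⊤ →
      ∀ f : S → ℝ, Measurable f → (∀ x, |f x| ≤ r x) → Integrable f m := by
    intro m hm f hf hfr
    refine ⟨hf.aestronglyMeasurable, ?_⟩
    rw [hasFiniteIntegral_iff_norm]
    refine lt_of_le_of_lt (lintegral_mono fun x => ?_) (lt_top_iff_ne_top.2 hm)
    exact ENNReal.ofReal_le_ofReal (by rw [Real.norm_eq_abs]; exact hfr x)
  have hrInt : ∀ m : Measure S, (∫⁻ x, ENNReal.ofReal (r x) ∂m) ≠ ⊤ → Integrable r m :=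
    fun m hm => hIntOf m hm r hrmeas (fun x => by rw [abs_of_nonneg (hr0 x)])
  have hrVal : ∀ m : Measure S, ∫ x, r x ∂m = (∫⁻ x, ENNReal.ofReal (r x) ∂m).toReal :=
    fun m => integral_eq_lintegral_of_nonneg_ae (Eventually.of_forall hr0)
      hrmeas.aestronglyMeasurable
  -- per-function bound
  have key : ∀ n (f : S → ℝ), Measurable f → (∀ x, |f x| ≤ r x) →
      (∫ x, f x ∂(πn n)) - ∫ x, f x ∂π ≤
        2 * (Lc n).toReal * L.toReal / (νn n Set.univ).toReal ^ 2 := by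
    intro n f hf hfr
    set Dr := (ν Set.univ).toReal with hDrdef
    set Dn := (νn n Set.univ).toReal with hDndef2
    set E := (Lc n).toReal with hEdef
    set Nr := L.toReal with hNrdef2
    have hfν : Integrable f ν := hIntOf ν (by rw [← hLdef]; exact hLne) f hf hfr
    have hfνn : Integrable f (νn n) := hIntOf _ (hLnne n) f hf hfr
    have hfνc : Integrable f (νc n) := hIntOf _ (hLcne n) f hf hfr
    have hInνn : |∫ x, f x ∂(νn n)| ≤ Nr := by
      have h1 : |∫ x, f x ∂(νn n)| ≤ ∫ x, |f x| ∂(νn n) := by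
        simpa [Real.norm_eq_abs] using norm_integral_le_integral_norm (μ := νn n) f
      refine h1.trans ?_
      have h2 : ∫ x, |f x| ∂(νn n) ≤ ∫ x, r x ∂(νn n) :=
        integral_mono hfνn.abs (hrInt _ (hLnne n)) hfr
      refine h2.trans ?_
      rw [hrVal]
      exact ENNReal.toReal_mono hLne (hLn_le n)
    have hIνc : |∫ x, f x ∂(νc n)| ≤ E := by
      have h1 : |∫ x, f x ∂(νc n)| ≤ ∫ x, |f x| ∂(νc n) := by
        simpa [Real.norm_eq_abs] using norm_integral_le_integral_norm (μ := νc n) f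
      refine h1.trans ?_
      have h2 : ∫ x, |f x| ∂(νc n) ≤ ∫ x, r x ∂(νc n) :=
        integral_mono hfνc.abs (hrInt _ (hLcne n)) hfr
      refine h2.trans (le_of_eq ?_)
      exact hrVal (νc n)
    have hsum : ∫ x, f x ∂ν = ∫ x, f x ∂(νn n) + ∫ x, f x ∂(νc n) := by
      rw [hsplit n, integral_add_measure hfνn hfνc]
    have hDnDr : Dn ≤ Dr := ENNReal.toReal_mono hνu_ne (hνn_le n)
    have hDrNr : Dr ≤ Nr := ENNReal.toReal_mono hLne (by rw [hLdef]; exact hle_r ν)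
    have hE0 : (0:ℝ) ≤ E := ENNReal.toReal_nonneg
    have hdiffE : Dr - Dn ≤ E := by
      have h1 : ν Set.univ = νn n Set.univ + νc n Set.univ := by
        rw [hsplit n, Measure.add_apply]
      have h2 : Dr = Dn + (νc n Set.univ).toReal := by
        rw [hDrdef, h1, ENNReal.toReal_add (hνnu_ne n) (hνcu_ne n), hDndef2]
      have h3 : (νc n Set.univ).toReal ≤ E :=
        ENNReal.toReal_mono (hLcne n) (hle_r (νc n))
      linarith
    have h1Dn : (1:ℝ) ≤ Dn := hDn1 n
    have h0Dn : (0:ℝ) < Dn := lt_of_lt_of_le one_pos h1Dn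
    have h0Dr : (0:ℝ) < Dr := lt_of_lt_of_le h0Dn hDnDr
    have h0Nr : (0:ℝ) ≤ Nr := ENNReal.toReal_nonneg
    have hIπ : ∫ x, f x ∂π = Dr⁻¹ * ∫ x, f x ∂ν := by
      rw [hπeq, integral_smul_measure, ENNReal.toReal_inv, smul_eq_mul, hDrdef]
    have hIπn : ∫ x, f x ∂(πn n) = Dn⁻¹ * ∫ x, f x ∂(νn n) := by
      rw [hπneq n, integral_smul_measure, ENNReal.toReal_inv, smul_eq_mul, hDndef2]
    set a := ∫ x, f x ∂(νn n) with hadef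
    set c := ∫ x, f x ∂(νc n) with hcdef
    rw [hIπn, hIπ, hsum]
    have habs_a : a ≤ Nr := (le_abs_self a).trans hInνn
    have hnc : -c ≤ E := (neg_le_abs c).trans hIνc
    have hDrDn0 : (0:ℝ) ≤ Dr - Dn := sub_nonneg.2 hDnDr
    have step1 : (Dn⁻¹ * a - Dr⁻¹ * (a + c)) * (Dn * Dr) = a * (Dr - Dn) + (-c) * Dn := by
      field_simp
      ring
    have step2 : a * (Dr - Dn) ≤ Nr * E := by
      have h4 := mul_le_mul_of_nonneg_right habs_a hDrDn0
      have h5 := mul_le_mul_of_nonneg_left hdiffE h0Nr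
      linarith
    have step3 : (-c) * Dn ≤ E * Nr := by
      have h4 : (-c) * Dn ≤ E * Dn := mul_le_mul_of_nonneg_right hnc h0Dn.le
      have h5 : E * Dn ≤ E * Nr := mul_le_mul_of_nonneg_left (hDnDr.trans hDrNr) hE0
      linarith
    have step4 : Dn⁻¹ * a - Dr⁻¹ * (a + c) ≤ 2 * E * Nr / (Dn * Dr) := by
      rw [le_div_iff₀ (mul_pos h0Dn h0Dr)]
      calc (Dn⁻¹ * a - Dr⁻¹ * (a + c)) * (Dn * Dr) = a * (Dr - Dn) + (-c) * Dn := step1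
        _ ≤ Nr * E + E * Nr := add_le_add step2 step3
        _ = 2 * E * Nr := by ring
    refine step4.trans ?_
    refine div_le_div_of_nonneg_left ?_ (pow_pos h0Dn 2) ?_
    · exact mul_nonneg (mul_nonneg (by norm_num) hE0) h0Nr
    · nlinarith
  -- upper bound for the sup
  have hub : ∀ n, ∀ d ∈ {d : ℝ | ∃ f : S → ℝ, Measurable f ∧ (∀ x, |f x| ≤ r x) ∧
      d = (∫ x, f x ∂(πn n)) - ∫ x, f x ∂π},
      d ≤ 2 * (Lc n).toReal * L.toReal / (νn n Set.univ).toReal ^ 2 := by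
    rintro n d ⟨f, hf, hfr, rfl⟩
    exact key n f hf hfr
  have hB0 : ∀ n, (0:ℝ) ≤ 2 * (Lc n).toReal * L.toReal / (νn n Set.univ).toReal ^ 2 :=
    fun n => div_nonneg (mul_nonneg (mul_nonneg (by norm_num) ENNReal.toReal_nonneg)
      ENNReal.toReal_nonneg) (sq_nonneg _)
  have hfirst : ∀ n, rdist (πn n) π r ≤
      2 * (Lc n).toReal * L.toReal / (νn n Set.univ).toReal ^ 2 :=
    fun n => Real.sSup_le (hub n) (hB0 n)
  have hrd0 : ∀ n, 0 ≤ rdist (πn n) π r := by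
    intro n
    have hmem : (0:ℝ) ∈ {d : ℝ | ∃ f : S → ℝ, Measurable f ∧ (∀ x, |f x| ≤ r x) ∧
        d = (∫ x, f x ∂(πn n)) - ∫ x, f x ∂π} :=
      ⟨fun _ => 0, measurable_const, fun x => by simpa using hr0 x, by simp⟩
    exact le_csSup ⟨_, fun x hx => hub n x hx⟩ hmem
  -- convergence of the tail term
  have hEtends : Tendsto (fun n => (Lc n).toReal) atTop (nhds 0) := by
    have hconv := tendsto_integral_of_dominated_convergence (μ := μ)
      (F := fun n ω => ∑ j ∈ Finset.range (τ ω),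
        if T n ω ≤ (j : ℕ∞) then r (X j ω) else 0)
      (f := fun _ => (0:ℝ)) (fun ω => ∑ j ∈ Finset.range (τ ω), r (X j ω))
      (fun n => (measurable_comp_nat
        (g := fun m ω => ∑ j ∈ Finset.range m,
          if T n ω ≤ (j : ℕ∞) then r (X j ω) else 0)
        (fun m => Finset.measurable_sum (Finset.range m) fun j _ =>
          Measurable.ite (hTset n {x | x ≤ (j : ℕ∞)}) (hrmeas.comp (hX j)) measurable_const)
        hτmeas).aestronglyMeasurable)
      hint
      (fun n => Eventually.of_forall fun ω => by
        rw [Real.norm_eq_abs, abs_of_nonneg (Finset.sum_nonneg fun j _ => by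
          split_ifs
          exacts [hr0 _, le_refl 0])]
        exact Finset.sum_le_sum fun j _ => by
          split_ifs
          exacts [le_refl _, hr0 _])
      (hTinf.mono fun ω hω => by
        have hev : ∀ᶠ n in atTop, (τ ω : ℕ∞) ≤ T n ω := hω.eventually_ge_atTop _
        refine Tendsto.congr' ?_ tendsto_const_nhds
        refine hev.mono fun n hn => ?_
        refine (Finset.sum_eq_zero fun j hj => if_neg (not_le.2 ?_)).symm
        have hjτ : (j : ℕ∞) < (τ ω : ℕ∞) := by exact_mod_cast Finset.mem_range.1 hj
        exact lt_of_lt_of_le hjτ hn)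
    simp only [integral_zero] at hconv
    have heq : (fun n => ∫ ω, (∑ j ∈ Finset.range (τ ω),
        if T n ω ≤ (j : ℕ∞) then r (X j ω) else 0) ∂μ) = fun n => (Lc n).toReal :=
      funext fun n => hEnL n
    rwa [heq] at hconv
  constructor
  · intro n
    rw [hEnL n, hNrL, hDnν n]
    exact hfirst n
  · have hg : Tendsto (fun n => 2 * (Lc n).toReal * L.toReal) atTop (nhds 0) := by
      have := (hEtends.const_mul (2:ℝ)).mul_const L.toReal
      simpa using this
    refine squeeze_zero hrd0 (fun n => (hfirst n).trans ?_) hg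
    refine div_le_self (mul_nonneg (mul_nonneg (by norm_num) ENNReal.toReal_nonneg)
      ENNReal.toReal_nonneg) ?_
    nlinarith [hDn1 n]
end
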